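/- Consider the configuration-model mean-field system with inertia δ = 0 and suppose α·f_min > β·e_max (sufficiently strong in-group love relative to out-group hate). Let c be a real number with 1/2 < c ≤ 1. Then every solution of the system on [0, ∞) with θ^B_{f,e}(0) = θ^R_{f,e}(0) = c for all (f,e) ∈ I satisfies θ^B_{f,e}(t) → 1 and θ^R_{f,e}(t) → 1 as t → ∞, for every (f,e) ∈ I (consensus on the initially more popular choice in every degree bin of both groups). -/

import Mathlib

open Set Filter

/-- Friend-weighted fraction with choice-1:
`P_F(t) = (Σ_{(f,e)} f·P_{f,e}·θ_{f,e}(t)) / (Σ_{(f,e)} f·P_{f,e})`,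
where `(f,e)` ranges over the index set `[fmin, fmax] × [emin, emax]`. -/
noncomputable def cfgPF (fmin fmax emin emax : ℕ) (P : ℕ → ℕ → ℝ)
    (θ : ℕ → ℕ → ℝ → ℝ) (t : ℝ) : ℝ :=
  (∑ f ∈ Finset.Icc fmin fmax, ∑ e ∈ Finset.Icc emin emax, (f : ℝ) * P f e * θ f e t) /
    (∑ f ∈ Finset.Icc fmin fmax, ∑ e ∈ Finset.Icc emin emax, (f : ℝ) * P f e)

/-- Enemy-weighted fraction with choice-1:
`P_E(t) = (Σ_{(f,e)} e·P_{f,e}·θ_{f,e}(t)) / (Σ_{(f,e)} e·P_{f,e})`. -/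
noncomputable def cfgPE (fmin fmax emin emax : ℕ) (P : ℕ → ℕ → ℝ)
    (θ : ℕ → ℕ → ℝ → ℝ) (t : ℝ) : ℝ :=
  (∑ f ∈ Finset.Icc fmin fmax, ∑ e ∈ Finset.Icc emin emax, (e : ℝ) * P f e * θ f e t) /
    (∑ f ∈ Finset.Icc fmin fmax, ∑ e ∈ Finset.Icc emin emax, (e : ℝ) * P f e)

/-- `g^B_{f,e}(t) = α·(f/(f+e))·(2P_F^B(t)−1) − β·(e/(f+e))·(2P_E^B(t)−1)`, where
`P_F^B` is the friend-weighted blue fraction and `P_E^B` the enemy-weighted red fraction. -/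
noncomputable def cfgGB (fmin fmax emin emax : ℕ) (PB PR : ℕ → ℕ → ℝ)
    (θB θR : ℕ → ℕ → ℝ → ℝ) (α β : ℝ) (f e : ℕ) (t : ℝ) : ℝ :=
  α * ((f : ℝ) / ((f : ℝ) + (e : ℝ))) * (2 * cfgPF fmin fmax emin emax PB θB t - 1)
    - β * ((e : ℝ) / ((f : ℝ) + (e : ℝ))) * (2 * cfgPE fmin fmax emin emax PR θR t - 1)

/-- `g^R_{f,e}(t) = α·(f/(f+e))·(2P_F^R(t)−1) − β·(e/(f+e))·(2P_E^R(t)−1)`, where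
`P_F^R` is the friend-weighted red fraction and `P_E^R` the enemy-weighted blue fraction. -/
noncomputable def cfgGR (fmin fmax emin emax : ℕ) (PB PR : ℕ → ℕ → ℝ)
    (θB θR : ℕ → ℕ → ℝ → ℝ) (α β : ℝ) (f e : ℕ) (t : ℝ) : ℝ :=
  α * ((f : ℝ) / ((f : ℝ) + (e : ℝ))) * (2 * cfgPF fmin fmax emin emax PR θR t - 1)
    - β * ((e : ℝ) / ((f : ℝ) + (e : ℝ))) * (2 * cfgPE fmin fmax emin emax PB θB t - 1)

/-- Right-hand side of the blue equation in bin `(f,e)`: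
`(1−θ^B_{f,e})·𝟙[g^B_{f,e}(t) > 0] − θ^B_{f,e}·𝟙[g^B_{f,e}(t) < 0]`. -/
noncomputable def cfgRhsB (fmin fmax emin emax : ℕ) (PB PR : ℕ → ℕ → ℝ)
    (θB θR : ℕ → ℕ → ℝ → ℝ) (α β : ℝ) (f e : ℕ) (t : ℝ) : ℝ :=
  (1 - θB f e t) * (if 0 < cfgGB fmin fmax emin emax PB PR θB θR α β f e t then 1 else 0)
    - θB f e t * (if cfgGB fmin fmax emin emax PB PR θB θR α β f e t < 0 then 1 else 0)

/-- Right-hand side of the red equation in bin `(f,e)`: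
`(1−θ^R_{f,e})·𝟙[g^R_{f,e}(t) > 0] − θ^R_{f,e}·𝟙[g^R_{f,e}(t) < 0]`. -/
noncomputable def cfgRhsR (fmin fmax emin emax : ℕ) (PB PR : ℕ → ℕ → ℝ)
    (θB θR : ℕ → ℕ → ℝ → ℝ) (α β : ℝ) (f e : ℕ) (t : ℝ) : ℝ :=
  (1 - θR f e t) * (if 0 < cfgGR fmin fmax emin emax PB PR θB θR α β f e t then 1 else 0)
    - θR f e t * (if cfgGR fmin fmax emin emax PB PR θB θR α β f e t < 0 then 1 else 0)

/-- The family `(θ^B_{f,e}, θ^R_{f,e})_{(f,e) ∈ [fmin,fmax] × [emin,emax]}` is a solution of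
the configuration-model mean-field system (inertia `δ = 0`) on the set `J`. -/
def IsCfgSolutionOn (fmin fmax emin emax : ℕ) (PB PR : ℕ → ℕ → ℝ)
    (θB θR : ℕ → ℕ → ℝ → ℝ) (α β : ℝ) (J : Set ℝ) : Prop :=
  ∀ f ∈ Finset.Icc fmin fmax, ∀ e ∈ Finset.Icc emin emax, ∀ t ∈ J,
    HasDerivWithinAt (θB f e)
      (cfgRhsB fmin fmax emin emax PB PR θB θR α β f e t) J t ∧
    HasDerivWithinAt (θR f e)
      (cfgRhsR fmin fmax emin emax PB PR θB θR α β f e t) J t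

/-! When every bin of both groups holds the same fraction `x > 1/2`, all weighted fractions
`P_F, P_E` equal `x`, so `g_{f,e} = (2x - 1)(α f - β e)/(f + e) > 0` in every bin and every
equation reduces to `θ' = 1 - θ`. Hence the synchronized relaxation
`v(t) = 1 - (1 - c) e^{-t}`, which stays above `1/2`, solves the whole system; since
`g > 0` persists on a short interval by continuity, uniqueness for `θ' = 1 - θ` together with
real induction shows that every solution coincides with `v`, and `v(t) → 1`. -/

open Topology

section Topology

variable {X Y ι : Type*} [TopologicalSpace X] [TopologicalSpace Y]

theorem ContinuousOn.isClosed_inter_setOf_eq [T2Space Y] {K : Set X} {u w : X → Y}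
    (hK : IsClosed K) (hu : ContinuousOn u K) (hw : ContinuousOn w K) :
    IsClosed (K ∩ {x | u x = w x}) :=
  (hu.prodMk hw).preimage_isClosed_of_isClosed hK isClosed_diagonal

theorem IsClosed.inter_biInter {K : Set X} {S : Set ι} {A : ι → Set X} (hK : IsClosed K)
    (hA : ∀ i ∈ S, IsClosed (K ∩ A i)) : IsClosed (K ∩ ⋂ i ∈ S, A i) := by
  have : K ∩ ⋂ i ∈ S, A i = K ∩ ⋂ i ∈ S, (K ∩ A i) := by
    ext x
    simp only [mem_inter_iff, mem_iInter]
    exact ⟨fun h => ⟨h.1, fun i hi => ⟨h.1, h.2 i hi⟩⟩, fun h => ⟨h.1, fun i hi => (h.2 i hi).2⟩⟩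
  exact this ▸ hK.inter (isClosed_biInter hA)

end Topology

theorem eqOn_Icc_of_hasDerivWithinAt_one_sub {u w : ℝ → ℝ} {a b : ℝ}
    (hu : ContinuousOn u (Icc a b)) (hu' : ∀ t ∈ Ico a b, HasDerivWithinAt u (1 - u t) (Ici t) t)
    (hw : ContinuousOn w (Icc a b)) (hw' : ∀ t ∈ Ico a b, HasDerivWithinAt w (1 - w t) (Ici t) t)
    (ha : u a = w a) : EqOn u w (Icc a b) :=
  have hlip : LipschitzOnWith 1 (fun y : ℝ => 1 - y) univ :=
    (LipschitzWith.of_dist_le_mul fun x y => by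
      simpa using (dist_sub_left (1 : ℝ) x y).le).lipschitzOnWith
  ODE_solution_unique_of_mem_Icc_right (v := fun _ y => 1 - y) (s := fun _ => univ)
    (fun _ _ => hlip) hu hu' (fun _ _ => mem_univ _) hw hw' (fun _ _ => mem_univ _) ha

theorem sum_sum_mul_div_sum_sum_of_forall_eq {ι κ : Type*} {F : Finset ι} {E : Finset κ}
    {w θ : ι → κ → ℝ} {x : ℝ} (hw : ∑ f ∈ F, ∑ e ∈ E, w f e ≠ 0)
    (hθ : ∀ f ∈ F, ∀ e ∈ E, θ f e = x) :
    (∑ f ∈ F, ∑ e ∈ E, w f e * θ f e) / ∑ f ∈ F, ∑ e ∈ E, w f e = x := by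
  have : ∑ f ∈ F, ∑ e ∈ E, w f e * θ f e = (∑ f ∈ F, ∑ e ∈ E, w f e) * x := by
    rw [Finset.sum_mul]
    refine Finset.sum_congr rfl fun f hf => ?_
    rw [Finset.sum_mul]
    exact Finset.sum_congr rfl fun e he => by rw [hθ f hf e he]
  rw [this, mul_div_cancel_left₀ x hw]

theorem mul_div_mul_sub_mul_div_mul_pos {a b f e x : ℝ} (hf : 0 < f) (he : 0 ≤ e)
    (hab : b * e < a * f) (hx : 1 / 2 < x) :
    0 < a * (f / (f + e)) * (2 * x - 1) - b * (e / (f + e)) * (2 * x - 1) := by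
  have hfe : 0 < f + e := by linarith
  have : a * (f / (f + e)) * (2 * x - 1) - b * (e / (f + e)) * (2 * x - 1)
      = (2 * x - 1) * ((a * f - b * e) / (f + e)) := by
    field_simp
  rw [this]
  exact mul_pos (by linarith) (div_pos (by linarith) hfe)

theorem half_lt_one_sub_mul_exp_neg {c t : ℝ} (hc : 1 / 2 < c) (ht : 0 ≤ t) :
    1 / 2 < 1 - (1 - c) * Real.exp (-t) := by
  have hpos := Real.exp_pos (-t)
  have hle : Real.exp (-t) ≤ 1 := Real.exp_le_one_iff.mpr (neg_nonpos.mpr ht)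
  -- `1 - (1 - c) e^{-t}` is a convex combination of `1` and `c`
  nlinarith

theorem hasDerivAt_one_sub_mul_exp_neg (c t : ℝ) :
    HasDerivAt (fun s => 1 - (1 - c) * Real.exp (-s)) (1 - (1 - (1 - c) * Real.exp (-t))) t :=
  ((((Real.hasDerivAt_exp (-t)).comp t (hasDerivAt_neg t)).const_mul (1 - c)).const_sub
    1).congr_deriv (by ring)

theorem tendsto_one_sub_mul_exp_neg (c : ℝ) :
    Tendsto (fun s => 1 - (1 - c) * Real.exp (-s)) atTop (𝓝 1) := by
  simpa using (Real.tendsto_exp_neg_atTop_nhds_zero.const_mul (1 - c)).const_sub 1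

section MeanField

variable {fmin fmax emin emax : ℕ} {PB PR P : ℕ → ℕ → ℝ} {θB θR θ : ℕ → ℕ → ℝ → ℝ}
  {α β : ℝ} {J : Set ℝ}

theorem continuousOn_cfgPF
    (hθ : ∀ f ∈ Finset.Icc fmin fmax, ∀ e ∈ Finset.Icc emin emax, ContinuousOn (θ f e) J) :
    ContinuousOn (cfgPF fmin fmax emin emax P θ) J :=
  ContinuousOn.div_const (continuousOn_finsetSum _ fun f hf => continuousOn_finsetSum _
    fun e he => continuousOn_const.mul (hθ f hf e he)) _

theorem continuousOn_cfgPE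
    (hθ : ∀ f ∈ Finset.Icc fmin fmax, ∀ e ∈ Finset.Icc emin emax, ContinuousOn (θ f e) J) :
    ContinuousOn (cfgPE fmin fmax emin emax P θ) J :=
  ContinuousOn.div_const (continuousOn_finsetSum _ fun f hf => continuousOn_finsetSum _
    fun e he => continuousOn_const.mul (hθ f hf e he)) _

theorem continuousOn_cfgGB (f e : ℕ)
    (hB : ∀ f ∈ Finset.Icc fmin fmax, ∀ e ∈ Finset.Icc emin emax, ContinuousOn (θB f e) J)
    (hR : ∀ f ∈ Finset.Icc fmin fmax, ∀ e ∈ Finset.Icc emin emax, ContinuousOn (θR f e) J) :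
    ContinuousOn (cfgGB fmin fmax emin emax PB PR θB θR α β f e) J :=
  (continuousOn_const.mul ((continuousOn_const.mul (continuousOn_cfgPF hB)).sub
    continuousOn_const)).sub (continuousOn_const.mul
    ((continuousOn_const.mul (continuousOn_cfgPE hR)).sub continuousOn_const))

theorem continuousOn_cfgGR (f e : ℕ)
    (hB : ∀ f ∈ Finset.Icc fmin fmax, ∀ e ∈ Finset.Icc emin emax, ContinuousOn (θB f e) J)
    (hR : ∀ f ∈ Finset.Icc fmin fmax, ∀ e ∈ Finset.Icc emin emax, ContinuousOn (θR f e) J) :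
    ContinuousOn (cfgGR fmin fmax emin emax PB PR θB θR α β f e) J :=
  (continuousOn_const.mul ((continuousOn_const.mul (continuousOn_cfgPF hR)).sub
    continuousOn_const)).sub (continuousOn_const.mul
    ((continuousOn_const.mul (continuousOn_cfgPE hB)).sub continuousOn_const))

theorem cfgPF_of_forall_eq {t x : ℝ} (hf1 : 1 ≤ fmin) (hf2 : fmin ≤ fmax) (he2 : emin ≤ emax)
    (hP : ∀ f ∈ Finset.Icc fmin fmax, ∀ e ∈ Finset.Icc emin emax, 0 < P f e)
    (hθ : ∀ f ∈ Finset.Icc fmin fmax, ∀ e ∈ Finset.Icc emin emax, θ f e t = x) :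
    cfgPF fmin fmax emin emax P θ t = x := by
  refine sum_sum_mul_div_sum_sum_of_forall_eq (ne_of_gt ?_) hθ
  refine Finset.sum_pos (fun f hf => Finset.sum_pos (fun e he => mul_pos ?_ (hP f hf e he))
    (Finset.nonempty_Icc.mpr he2)) (Finset.nonempty_Icc.mpr hf2)
  exact_mod_cast hf1.trans (Finset.mem_Icc.mp hf).1

theorem cfgPE_of_forall_eq {t x : ℝ} (he1 : 1 ≤ emin) (hf2 : fmin ≤ fmax) (he2 : emin ≤ emax)
    (hP : ∀ f ∈ Finset.Icc fmin fmax, ∀ e ∈ Finset.Icc emin emax, 0 < P f e)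
    (hθ : ∀ f ∈ Finset.Icc fmin fmax, ∀ e ∈ Finset.Icc emin emax, θ f e t = x) :
    cfgPE fmin fmax emin emax P θ t = x := by
  refine sum_sum_mul_div_sum_sum_of_forall_eq (ne_of_gt ?_) hθ
  refine Finset.sum_pos (fun f hf => Finset.sum_pos (fun e he => mul_pos ?_ (hP f hf e he))
    (Finset.nonempty_Icc.mpr he2)) (Finset.nonempty_Icc.mpr hf2)
  exact_mod_cast he1.trans (Finset.mem_Icc.mp he).1

theorem cfgRhsB_of_pos {f e : ℕ} {t : ℝ}
    (hg : 0 < cfgGB fmin fmax emin emax PB PR θB θR α β f e t) :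
    cfgRhsB fmin fmax emin emax PB PR θB θR α β f e t = 1 - θB f e t := by
  simp [cfgRhsB, hg, hg.not_gt]

theorem cfgRhsR_of_pos {f e : ℕ} {t : ℝ}
    (hg : 0 < cfgGR fmin fmax emin emax PB PR θB θR α β f e t) :
    cfgRhsR fmin fmax emin emax PB PR θB θR α β f e t = 1 - θR f e t := by
  simp [cfgRhsR, hg, hg.not_gt]

theorem IsCfgSolutionOn.continuousOn_blue
    (hsol : IsCfgSolutionOn fmin fmax emin emax PB PR θB θR α β J) :
    ∀ f ∈ Finset.Icc fmin fmax, ∀ e ∈ Finset.Icc emin emax, ContinuousOn (θB f e) J :=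
  fun f hf e he t ht => (hsol f hf e he t ht).1.continuousWithinAt

theorem IsCfgSolutionOn.continuousOn_red
    (hsol : IsCfgSolutionOn fmin fmax emin emax PB PR θB θR α β J) :
    ∀ f ∈ Finset.Icc fmin fmax, ∀ e ∈ Finset.Icc emin emax, ContinuousOn (θR f e) J :=
  fun f hf e he t ht => (hsol f hf e he t ht).2.continuousWithinAt

def IsCfgSyncAt (fmin fmax emin emax : ℕ) (θB θR : ℕ → ℕ → ℝ → ℝ) (x t : ℝ) : Prop :=
  ∀ f ∈ Finset.Icc fmin fmax, ∀ e ∈ Finset.Icc emin emax, θB f e t = x ∧ θR f e t = x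

theorem cfgG_pos_of_isCfgSyncAt {x t : ℝ} (hf1 : 1 ≤ fmin) (hf2 : fmin ≤ fmax)
    (he1 : 1 ≤ emin) (he2 : emin ≤ emax)
    (hPB : ∀ f ∈ Finset.Icc fmin fmax, ∀ e ∈ Finset.Icc emin emax, 0 < PB f e)
    (hPR : ∀ f ∈ Finset.Icc fmin fmax, ∀ e ∈ Finset.Icc emin emax, 0 < PR f e)
    (hα : 0 ≤ α) (hβ : 0 ≤ β) (hdom : β * (emax : ℝ) < α * (fmin : ℝ))
    (hsync : IsCfgSyncAt fmin fmax emin emax θB θR x t) (hx : 1 / 2 < x) :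
    ∀ f ∈ Finset.Icc fmin fmax, ∀ e ∈ Finset.Icc emin emax,
      0 < cfgGB fmin fmax emin emax PB PR θB θR α β f e t ∧
      0 < cfgGR fmin fmax emin emax PB PR θB θR α β f e t := by
  intro f hf e he
  obtain ⟨hfmin, -⟩ := Finset.mem_Icc.mp hf
  obtain ⟨-, hemax⟩ := Finset.mem_Icc.mp he
  have hf0 : (0 : ℝ) < f := Nat.cast_pos.mpr (hf1.trans hfmin)
  have hbin : β * e < α * f := calc
    β * e ≤ β * emax := by gcongr
    _ < α * fmin := hdom
    _ ≤ α * f := by gcongr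
  have hB : ∀ f ∈ Finset.Icc fmin fmax, ∀ e ∈ Finset.Icc emin emax, θB f e t = x :=
    fun f hf e he => (hsync f hf e he).1
  have hR : ∀ f ∈ Finset.Icc fmin fmax, ∀ e ∈ Finset.Icc emin emax, θR f e t = x :=
    fun f hf e he => (hsync f hf e he).2
  unfold cfgGB cfgGR
  rw [cfgPF_of_forall_eq hf1 hf2 he2 hPB hB, cfgPE_of_forall_eq he1 hf2 he2 hPR hR,
    cfgPF_of_forall_eq hf1 hf2 he2 hPR hR, cfgPE_of_forall_eq he1 hf2 he2 hPB hB]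
  exact ⟨mul_div_mul_sub_mul_div_mul_pos hf0 e.cast_nonneg hbin hx,
    mul_div_mul_sub_mul_div_mul_pos hf0 e.cast_nonneg hbin hx⟩

theorem isClosed_inter_setOf_isCfgSyncAt {K : Set ℝ} {v : ℝ → ℝ} (hK : IsClosed K)
    (hB : ∀ f ∈ Finset.Icc fmin fmax, ∀ e ∈ Finset.Icc emin emax, ContinuousOn (θB f e) K)
    (hR : ∀ f ∈ Finset.Icc fmin fmax, ∀ e ∈ Finset.Icc emin emax, ContinuousOn (θR f e) K)
    (hv : ContinuousOn v K) :
    IsClosed (K ∩ {t | IsCfgSyncAt fmin fmax emin emax θB θR (v t) t}) := by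
  have : {t | IsCfgSyncAt fmin fmax emin emax θB θR (v t) t} =
      ⋂ f ∈ (Finset.Icc fmin fmax : Set ℕ), ⋂ e ∈ (Finset.Icc emin emax : Set ℕ),
        ({t | θB f e t = v t} ∩ {t | θR f e t = v t}) := by
    ext t
    simp only [IsCfgSyncAt, mem_ofPred_eq, mem_iInter, Finset.mem_coe, mem_inter_iff]
  rw [this]
  refine hK.inter_biInter fun f hf => hK.inter_biInter fun e he => ?_
  rw [inter_inter_distrib_left]
  exact ((hB f hf e he).isClosed_inter_setOf_eq hK hv).inter
    ((hR f hf e he).isClosed_inter_setOf_eq hK hv)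

theorem IsCfgSolutionOn.eventually_isCfgSyncAt {v : ℝ → ℝ} {x : ℝ}
    (hsol : IsCfgSolutionOn fmin fmax emin emax PB PR θB θR α β (Ici 0))
    (hv : ∀ t, HasDerivAt v (1 - v t) t) (hx : 0 ≤ x)
    (hsync : IsCfgSyncAt fmin fmax emin emax θB θR (v x) x)
    (hg : ∀ f ∈ Finset.Icc fmin fmax, ∀ e ∈ Finset.Icc emin emax,
      0 < cfgGB fmin fmax emin emax PB PR θB θR α β f e x ∧
      0 < cfgGR fmin fmax emin emax PB PR θB θR α β f e x) :
    ∀ᶠ t in 𝓝[>] x, IsCfgSyncAt fmin fmax emin emax θB θR (v t) t := by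
  have hpos : ∀ᶠ t in 𝓝[≥] x, ∀ f ∈ Finset.Icc fmin fmax, ∀ e ∈ Finset.Icc emin emax,
      0 < cfgGB fmin fmax emin emax PB PR θB θR α β f e t ∧
      0 < cfgGR fmin fmax emin emax PB PR θB θR α β f e t := by
    simp only [eventually_all_finset]
    intro f hf e he
    refine nhdsWithin_mono _ (Ici_subset_Ici.mpr hx) (Eventually.and ?_ ?_)
    · exact (continuousOn_cfgGB f e hsol.continuousOn_blue hsol.continuousOn_red x hx).eventually
        (lt_mem_nhds (hg f hf e he).1)
    · exact (continuousOn_cfgGR f e hsol.continuousOn_blue hsol.continuousOn_red x hx).eventually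
        (lt_mem_nhds (hg f hf e he).2)
  obtain ⟨y, hxy, hy⟩ := mem_nhdsGE_iff_exists_Ico_subset.mp hpos
  have hrelax : ∀ {u r : ℝ → ℝ}, (∀ t ∈ Ici (0 : ℝ), HasDerivWithinAt u (r t) (Ici 0) t) →
      (∀ t ∈ Ico x y, r t = 1 - u t) → u x = v x → EqOn u v (Icc x y) := by
    intro u r hu hr hux
    have hIcc : Icc x y ⊆ Ici 0 := fun t ht => hx.trans ht.1
    refine eqOn_Icc_of_hasDerivWithinAt_one_sub
      (fun t ht => (hu t (hIcc ht)).continuousWithinAt.mono hIcc) (fun t ht => ?_)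
      (fun t _ => (hv t).continuousAt.continuousWithinAt) (fun t _ => (hv t).hasDerivWithinAt) hux
    rw [← hr t ht]
    exact (hu t (hIcc (Ico_subset_Icc_self ht))).mono (Ici_subset_Ici.mpr (hx.trans ht.1))
  filter_upwards [Ioo_mem_nhdsGT hxy] with t ht f hf e he
  have ht' : t ∈ Icc x y := Ioo_subset_Icc_self ht
  exact ⟨hrelax (fun τ hτ => (hsol f hf e he τ hτ).1)
      (fun τ hτ => cfgRhsB_of_pos ((hy hτ) f hf e he).1) (hsync f hf e he).1 ht',
    hrelax (fun τ hτ => (hsol f hf e he τ hτ).2)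
      (fun τ hτ => cfgRhsR_of_pos ((hy hτ) f hf e he).2) (hsync f hf e he).2 ht'⟩

theorem IsCfgSolutionOn.isCfgSyncAt {v : ℝ → ℝ}
    (hsol : IsCfgSolutionOn fmin fmax emin emax PB PR θB θR α β (Ici 0))
    (hv : ∀ t, HasDerivAt v (1 - v t) t)
    (hg : ∀ t, 0 ≤ t → IsCfgSyncAt fmin fmax emin emax θB θR (v t) t →
      ∀ f ∈ Finset.Icc fmin fmax, ∀ e ∈ Finset.Icc emin emax,
        0 < cfgGB fmin fmax emin emax PB PR θB θR α β f e t ∧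
        0 < cfgGR fmin fmax emin emax PB PR θB θR α β f e t)
    (h0 : IsCfgSyncAt fmin fmax emin emax θB θR (v 0) 0) :
    ∀ t, 0 ≤ t → IsCfgSyncAt fmin fmax emin emax θB θR (v t) t := by
  intro t ht
  have hclosed : IsClosed ({s | IsCfgSyncAt fmin fmax emin emax θB θR (v s) s} ∩ Icc 0 t) := by
    rw [inter_comm]
    exact isClosed_inter_setOf_isCfgSyncAt isClosed_Icc
      (fun f hf e he => (hsol.continuousOn_blue f hf e he).mono Icc_subset_Ici_self)
      (fun f hf e he => (hsol.continuousOn_red f hf e he).mono Icc_subset_Ici_self)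
      (fun s _ => (hv s).continuousAt.continuousWithinAt)
  exact hclosed.Icc_subset_of_forall_mem_nhdsWithin h0
    (fun x hx => hsol.eventually_isCfgSyncAt hv hx.2.1 hx.1 (hg x hx.2.1 hx.1)) ⟨ht, le_rfl⟩

end MeanField

theorem cfg_consensus_to_one_general
    (fmin fmax emin emax : ℕ)
    (hf1 : 1 ≤ fmin) (hf2 : fmin ≤ fmax) (he1 : 1 ≤ emin) (he2 : emin ≤ emax)
    (PB PR : ℕ → ℕ → ℝ)
    (hPB : ∀ f ∈ Finset.Icc fmin fmax, ∀ e ∈ Finset.Icc emin emax, 0 < PB f e)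
    (hPR : ∀ f ∈ Finset.Icc fmin fmax, ∀ e ∈ Finset.Icc emin emax, 0 < PR f e)
    (α β : ℝ) (hα : α ∈ Set.Icc (0:ℝ) 1) (hβ : β ∈ Set.Icc (0:ℝ) 1)
    (hdom : β * (emax : ℝ) < α * (fmin : ℝ))
    (c : ℝ) (hc1 : 1 / 2 < c)
    (θB θR : ℕ → ℕ → ℝ → ℝ)
    (hsol : IsCfgSolutionOn fmin fmax emin emax PB PR θB θR α β (Set.Ici 0))
    (h0 : ∀ f ∈ Finset.Icc fmin fmax, ∀ e ∈ Finset.Icc emin emax,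
      θB f e 0 = c ∧ θR f e 0 = c) :
    ∀ f ∈ Finset.Icc fmin fmax, ∀ e ∈ Finset.Icc emin emax,
      Filter.Tendsto (θB f e) Filter.atTop (nhds (1:ℝ)) ∧
      Filter.Tendsto (θR f e) Filter.atTop (nhds (1:ℝ)) := by
  have hsync : ∀ t, 0 ≤ t →
      IsCfgSyncAt fmin fmax emin emax θB θR (1 - (1 - c) * Real.exp (-t)) t :=
    hsol.isCfgSyncAt (hasDerivAt_one_sub_mul_exp_neg c)
      (fun t ht hs => cfgG_pos_of_isCfgSyncAt hf1 hf2 he1 he2 hPB hPR hα.1 hβ.1 hdom hs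
        (half_lt_one_sub_mul_exp_neg hc1 ht))
      (by rw [neg_zero, Real.exp_zero, mul_one, sub_sub_cancel]; exact h0)
  intro f hf e he
  have hlim := tendsto_one_sub_mul_exp_neg c
  exact ⟨hlim.congr' (eventually_ge_atTop 0 |>.mono fun t ht => ((hsync t ht) f hf e he).1.symm),
    hlim.congr' (eventually_ge_atTop 0 |>.mono fun t ht => ((hsync t ht) f hf e he).2.symm)⟩

/-- In the configuration-model mean-field system with `δ = 0`, if
`α·f_min > β·e_max` and `θ^B_{f,e}(0) = θ^R_{f,e}(0) = c` for all bins with `1/2 < c ≤ 1`,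
then every solution on `[0,∞)` satisfies `θ^B_{f,e}(t) → 1` and `θ^R_{f,e}(t) → 1`
for every bin `(f,e)` (consensus on the initially more popular choice). -/
theorem cfg_consensus_to_one
    (fmin fmax emin emax : ℕ)
    (hf1 : 1 ≤ fmin) (hf2 : fmin ≤ fmax) (he1 : 1 ≤ emin) (he2 : emin ≤ emax)
    (PB PR : ℕ → ℕ → ℝ)
    (hPB : ∀ f ∈ Finset.Icc fmin fmax, ∀ e ∈ Finset.Icc emin emax, 0 < PB f e)
    (hPR : ∀ f ∈ Finset.Icc fmin fmax, ∀ e ∈ Finset.Icc emin emax, 0 < PR f e)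
    (α β : ℝ) (hα : α ∈ Set.Icc (0:ℝ) 1) (hβ : β ∈ Set.Icc (0:ℝ) 1)
    (hdom : β * (emax : ℝ) < α * (fmin : ℝ))
    (c : ℝ) (hc1 : 1 / 2 < c) (hc2 : c ≤ 1)
    (θB θR : ℕ → ℕ → ℝ → ℝ)
    (hsol : IsCfgSolutionOn fmin fmax emin emax PB PR θB θR α β (Set.Ici 0))
    (h0 : ∀ f ∈ Finset.Icc fmin fmax, ∀ e ∈ Finset.Icc emin emax,
      θB f e 0 = c ∧ θR f e 0 = c) :
    ∀ f ∈ Finset.Icc fmin fmax, ∀ e ∈ Finset.Icc emin emax,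
      Filter.Tendsto (θB f e) Filter.atTop (nhds (1:ℝ)) ∧
      Filter.Tendsto (θR f e) Filter.atTop (nhds (1:ℝ)) :=
  cfg_consensus_to_one_general fmin fmax emin emax hf1 hf2 he1 he2 PB PR hPB hPR α β hα hβ hdom c
    hc1 θB θR hsol h0
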